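/- arXiv:2405.06163 — 3 statements merged into one kernel-verified Lean document; each statement's English description precedes it below -/
import Mathlib

section
/- The ring R_m is flat as an O-module (equivalently, since O is a discrete valuation ring, R_m is π-torsion-free). This is the chart-level form of Theorem 5.1(a): the splitting model M^spl_I is flat over O, since its affine charts around the worst point are products of affine spaces with Spec R_m. -/
/-!
Write `J` for the ideal of `2 × 2` minors, so that `I_m = J + (g)` with
`g = ∑ xᵢ y_{m+1-i} - 2π`. Over any ring `A`, `J` is the kernel of the Segre map
`xᵢ ↦ s₀ tᵢ`, `yᵢ ↦ s₁ tᵢ`: it is a monomial map, and two monomials with the same image differ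
by a chain of exchanges `xᵢ y_j ↝ x_j yᵢ`. Hence `J` is prime whenever `A` is a domain.
If `π f = j + g b` with `j ∈ J`, reduce modulo `π`: there `g ≡ ∑ xᵢ y_{m+1-i}`, which is not in
`J` because `2 ≠ 0` in `k`, so `b ∈ J + (π)`, say `b = a + π b'`. Then `π (f - g b') ∈ J`, so
`f - g b' ∈ J` and `f ∈ I_m`. Thus `π` is regular on `R_m`, i.e. `R_m` is torsion-free, hence
flat over the DVR `O`.
-/

open MvPolynomial

/-- The `x`-variables. -/
noncomputable def xVar {m : ℕ} (O : Type*) [CommRing O] (i : Fin m) :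
    MvPolynomial (Fin m ⊕ Fin m) O := X (Sum.inl i)

/-- The `y`-variables. -/
noncomputable def yVar {m : ℕ} (O : Type*) [CommRing O] (i : Fin m) :
    MvPolynomial (Fin m ⊕ Fin m) O := X (Sum.inr i)

/-- The ideal `I_m`, generated by the 2×2 minors `xᵢyⱼ − xⱼyᵢ` for `i < j` together with
`(Σ_{i=1}^m xᵢ y_{m+1−i}) − 2π`  (here `Fin.rev` realizes `i ↦ m+1−i` in 0-indexing). -/
noncomputable def splitChartIdeal (O : Type*) [CommRing O] (π : O) (m : ℕ) :
    Ideal (MvPolynomial (Fin m ⊕ Fin m) O) :=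
  Ideal.span
    ({p | ∃ i j : Fin m, i < j ∧ p = xVar O i * yVar O j - xVar O j * yVar O i} ∪
      {(∑ i : Fin m, xVar O i * yVar O i.rev) - C (2 * π)})

namespace MvPolynomial

variable {R σ τ : Type*} [CommRing R]

theorem sub_mapDomain_mem {I : Ideal (MvPolynomial σ R)} (ρ : (σ →₀ ℕ) → (σ →₀ ℕ))
    (hρ : ∀ d, monomial d 1 - monomial (ρ d) 1 ∈ I) (f : MvPolynomial σ R) :
    f - AddMonoidAlgebra.mapDomain ρ f ∈ I := by
  induction f using induction_on' with
  | monomial d r =>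
    rw [← single_eq_monomial, AddMonoidAlgebra.mapDomain_single, single_eq_monomial,
      single_eq_monomial]
    simpa only [mul_sub, C_mul_monomial, mul_one] using I.mul_mem_left (C r) (hρ d)
  | add f g hf hg =>
    rw [AddMonoidAlgebra.mapDomain_add, add_sub_add_comm]
    exact add_mem hf hg

theorem mem_of_mapDomain_eq_zero {I : Ideal (MvPolynomial σ R)} (e : (σ →₀ ℕ) → (τ →₀ ℕ))
    (he : ∀ d d', e d = e d' → monomial d 1 - monomial d' 1 ∈ I) {f : MvPolynomial σ R}
    (hf : AddMonoidAlgebra.mapDomain e f = 0) : f ∈ I := by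
  have hcomp : AddMonoidAlgebra.mapDomain (Function.invFun e ∘ e) f =
      AddMonoidAlgebra.mapDomain (Function.invFun e) (AddMonoidAlgebra.mapDomain e f) := by
    apply AddMonoidAlgebra.ext
    simp only [AddMonoidAlgebra.coeff_mapDomain, Finsupp.mapDomain_comp]
  -- `invFun e ∘ e` picks one exponent in each fibre of `e`
  have hsub := sub_mapDomain_mem (I := I) (Function.invFun e ∘ e)
    (fun d => he _ _ (Function.invFun_eq ⟨d, rfl⟩).symm) f
  rwa [hcomp, hf, AddMonoidAlgebra.mapDomain_zero, sub_zero] at hsub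

end MvPolynomial

section Minors

variable (A : Type*) [CommRing A] (m : ℕ)

noncomputable def minorIdeal : Ideal (MvPolynomial (Fin m ⊕ Fin m) A) :=
  Ideal.span {p | ∃ i j : Fin m, i < j ∧ p = xVar A i * yVar A j - xVar A j * yVar A i}

/-- The exponent of the image of each variable under the Segre map
`xᵢ ↦ s₀ tᵢ`, `yᵢ ↦ s₁ tᵢ`, where `tᵢ = X (inl i)` and `sₐ = X (inr a)`. -/
noncomputable def segreWeight : Fin m ⊕ Fin m → (Fin m ⊕ Fin 2 →₀ ℕ) :=
  Sum.elim (fun i => Finsupp.single (Sum.inl i) 1 + Finsupp.single (Sum.inr 0) 1)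
    (fun i => Finsupp.single (Sum.inl i) 1 + Finsupp.single (Sum.inr 1) 1)

noncomputable def segreExp : ((Fin m ⊕ Fin m) →₀ ℕ) →+ (Fin m ⊕ Fin 2 →₀ ℕ) :=
  (Finsupp.linearCombination ℕ (segreWeight m)).toAddMonoidHom

noncomputable def segre : MvPolynomial (Fin m ⊕ Fin m) A →ₐ[A] MvPolynomial (Fin m ⊕ Fin 2) A :=
  AddMonoidAlgebra.mapDomainAlgHom A A (segreExp m)

variable {A m}

theorem segreExp_apply_inl (d : (Fin m ⊕ Fin m) →₀ ℕ) (l : Fin m) :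
    segreExp m d (Sum.inl l) = d (Sum.inl l) + d (Sum.inr l) := by
  simp [segreExp, segreWeight, Finsupp.linearCombination_apply, Finsupp.sum_fintype,
    Fintype.sum_sum_type, Finsupp.single_apply]

theorem segreExp_apply_inr_zero (d : (Fin m ⊕ Fin m) →₀ ℕ) :
    segreExp m d (Sum.inr 0) = ∑ l, d (Sum.inl l) := by
  simp [segreExp, segreWeight, Finsupp.linearCombination_apply, Finsupp.sum_fintype,
    Fintype.sum_sum_type]

theorem segre_X (v : Fin m ⊕ Fin m) : segre A m (X v) = monomial (segreWeight m v) 1 := by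
  simp [segre, segreExp, X, ← single_eq_monomial]

theorem minor_mem_minorIdeal {i j : Fin m} (hij : i ≠ j) :
    xVar A i * yVar A j - xVar A j * yVar A i ∈ minorIdeal A m := by
  rcases hij.lt_or_gt with h | h
  · exact Ideal.subset_span ⟨i, j, h, rfl⟩
  · have := neg_mem (Ideal.subset_span ⟨j, i, h, rfl⟩ : _ ∈ minorIdeal A m)
    rwa [neg_sub] at this

theorem monomial_exchange_mem_minorIdeal (c : (Fin m ⊕ Fin m) →₀ ℕ) {i j : Fin m} (hij : i ≠ j) :
    monomial (c + Finsupp.single (Sum.inl i) 1 + Finsupp.single (Sum.inr j) 1) (1 : A) -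
      monomial (c + Finsupp.single (Sum.inl j) 1 + Finsupp.single (Sum.inr i) 1) 1 ∈
      minorIdeal A m := by
  have h := (minorIdeal A m).mul_mem_left (monomial c 1) (minor_mem_minorIdeal hij)
  simpa only [xVar, yVar, X, mul_sub, monomial_mul, mul_one, add_assoc] using h

/-- Each exchange `xᵢ y_j ↝ x_j yᵢ` with `d' (xᵢ) < d (xᵢ)` and `d (x_j) < d' (x_j)` lowers
`∑ₗ (d (xₗ) - d' (xₗ))` (truncated subtraction). -/
theorem monomial_sub_monomial_mem_minorIdeal {d d' : (Fin m ⊕ Fin m) →₀ ℕ}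
    (hrow : ∀ l, d (Sum.inl l) + d (Sum.inr l) = d' (Sum.inl l) + d' (Sum.inr l))
    (hx : ∑ l, d (Sum.inl l) = ∑ l, d' (Sum.inl l)) :
    monomial d (1 : A) - monomial d' 1 ∈ minorIdeal A m := by
  induction hn : ∑ l, (d (Sum.inl l) - d' (Sum.inl l)) using Nat.strong_induction_on
    generalizing d with
  | _ n ih =>
  by_cases hgt : ∃ i, d' (Sum.inl i) < d (Sum.inl i)
  · obtain ⟨i, hi⟩ := hgt
    obtain ⟨j, hj⟩ : ∃ j, d (Sum.inl j) < d' (Sum.inl j) := by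
      by_contra! hle
      exact (Finset.sum_lt_sum (fun l _ => hle l) ⟨i, Finset.mem_univ _, hi⟩).ne' hx
    have hij : i ≠ j := by rintro rfl; omega
    obtain ⟨c₁, rfl⟩ := le_iff_exists_add'.mp
      (Finsupp.single_le_iff.mpr (by have := hrow j; omega : 1 ≤ d (Sum.inr j)))
    obtain ⟨c, rfl⟩ := le_iff_exists_add'.mp (Finsupp.single_le_iff.mpr (by
      simp only [Finsupp.add_apply, Finsupp.single_apply, reduceCtorEq, if_false, add_zero] at hi
      omega : 1 ≤ c₁ (Sum.inl i)))
    rw [← sub_add_sub_cancel _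
      (monomial (c + Finsupp.single (Sum.inl j) 1 + Finsupp.single (Sum.inr i) 1) (1 : A))]
    refine add_mem (monomial_exchange_mem_minorIdeal c hij) (ih _ ?_ ?_ ?_ rfl)
    all_goals simp only [Finsupp.add_apply, Finsupp.single_apply, Sum.inl.injEq, Sum.inr.injEq,
      reduceCtorEq, add_zero, ↓reduceIte, if_neg hij] at hi hj hrow hx hn ⊢
    · rw [← hn]
      refine Finset.sum_lt_sum (fun l _ => ?_) ⟨i, Finset.mem_univ _, ?_⟩
      · split_ifs <;> subst_vars <;> omega
      · split_ifs <;> omega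
    · intro l
      have := hrow l
      split_ifs at this ⊢ <;> omega
    · rw [← hx]
      simp only [Finset.sum_add_distrib, Finset.sum_ite_eq, Finset.mem_univ, if_true]
  · push Not at hgt
    have heq : ∀ l, d (Sum.inl l) = d' (Sum.inl l) := fun l =>
      (Finset.sum_eq_sum_iff_of_le fun l _ => hgt l).mp hx l (Finset.mem_univ l)
    have : d = d' := by
      ext (l | l)
      · exact heq l
      · have := hrow l; have := heq l; omega
    rw [this, sub_self]
    exact zero_mem _

end Minors

section Segre

variable {A : Type*} [CommRing A] {m : ℕ}

theorem minorIdeal_le_ker_segre : minorIdeal A m ≤ RingHom.ker (segre A m) := by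
  refine Ideal.span_le.mpr ?_
  rintro _ ⟨i, j, -, rfl⟩
  have hweight : segreWeight m (Sum.inl i) + segreWeight m (Sum.inr j) =
      segreWeight m (Sum.inl j) + segreWeight m (Sum.inr i) := by
    simp only [segreWeight, Sum.elim_inl, Sum.elim_inr]
    abel
  simp [xVar, yVar, segre_X, monomial_mul, hweight]

theorem ker_segre : RingHom.ker (segre A m) = minorIdeal A m := by
  refine le_antisymm (fun f hf => ?_) minorIdeal_le_ker_segre
  refine MvPolynomial.mem_of_mapDomain_eq_zero (segreExp m) (fun d d' h => ?_) hf
  refine monomial_sub_monomial_mem_minorIdeal (fun l => ?_) ?_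
  · simpa only [segreExp_apply_inl] using DFunLike.congr_fun h (Sum.inl l)
  · simpa only [segreExp_apply_inr_zero] using DFunLike.congr_fun h (Sum.inr 0)

theorem minorIdeal_isPrime [IsDomain A] : (minorIdeal A m).IsPrime :=
  ker_segre (A := A) ▸ RingHom.ker_isPrime _

theorem C_notMem_minorIdeal {a : A} (ha : a ≠ 0) : C a ∉ minorIdeal A m := by
  rw [← ker_segre, RingHom.mem_ker, ← algebraMap_eq, AlgHom.commutes, algebraMap_eq]
  exact C_ne_zero.mpr ha

end Segre

section Reduction

variable {A B : Type*} [CommRing A] [CommRing B] {m : ℕ}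

theorem map_xVar (r : A →+* B) (i : Fin m) : MvPolynomial.map r (xVar A i) = xVar B i :=
  map_X r _

theorem map_yVar (r : A →+* B) (i : Fin m) : MvPolynomial.map r (yVar A i) = yVar B i :=
  map_X r _

theorem map_minorIdeal (r : A →+* B) :
    Ideal.map (MvPolynomial.map r) (minorIdeal A m) = minorIdeal B m := by
  rw [minorIdeal, minorIdeal, Ideal.map_span]
  congr 1
  ext p
  simp only [Set.mem_image, Set.mem_ofPred_eq]
  constructor
  · rintro ⟨_, ⟨i, j, hij, rfl⟩, rfl⟩
    exact ⟨i, j, hij, by simp [map_xVar, map_yVar]⟩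
  · rintro ⟨i, j, hij, rfl⟩
    exact ⟨_, ⟨i, j, hij, rfl⟩, by simp [map_xVar, map_yVar]⟩

/-- Evaluating at `x = y = 𝟙_{i₀, i₀.rev}` kills every minor and sends `∑ xᵢ y_{rev i}` to `2`. -/
theorem sum_notMem_minorIdeal (h2 : (2 : B) ≠ 0) (hm : 2 ≤ m) :
    ∑ i : Fin m, xVar B i * yVar B i.rev ∉ minorIdeal B m := by
  set i₀ : Fin m := ⟨0, by omega⟩
  have hrev : i₀ ≠ i₀.rev := by
    rw [Ne, Fin.ext_iff, Fin.val_rev]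
    simp only [i₀]
    omega
  set a : Fin m → B := fun i => if i = i₀ ∨ i = i₀.rev then 1 else 0
  have hle : minorIdeal B m ≤ RingHom.ker (eval (Sum.elim a a)) := by
    refine Ideal.span_le.mpr ?_
    rintro _ ⟨i, j, -, rfl⟩
    simp [xVar, yVar, mul_comm]
  intro hq
  have h := hle hq
  rw [RingHom.mem_ker] at h
  have hterm : ∀ i, a i * a i.rev = if i ∈ ({i₀, i₀.rev} : Finset (Fin m)) then 1 else 0 := by
    intro i
    simp only [a, Finset.mem_insert, Finset.mem_singleton, Fin.rev_eq_iff]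
    split_ifs <;> simp_all
  simp only [map_sum, map_mul, xVar, yVar, eval_X, Sum.elim_inl, Sum.elim_inr, hterm,
    Finset.sum_ite_mem, Finset.univ_inter, Finset.sum_const, Finset.card_pair hrev] at h
  exact h2 (by simpa using h)

end Reduction

section Torsion

variable {O : Type*} [CommRing O] {m : ℕ}

theorem minorIdeal_sup_map_C_eq_comap (P : Ideal O) :
    minorIdeal O m ⊔ P.map C =
      (minorIdeal (O ⧸ P) m).comap (MvPolynomial.map (Ideal.Quotient.mk P)) := by
  rw [← map_minorIdeal (Ideal.Quotient.mk P), Ideal.comap_map_of_surjective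
      (MvPolynomial.map (σ := Fin m ⊕ Fin m) (Ideal.Quotient.mk P))
      (map_surjective _ Ideal.Quotient.mk_surjective),
    ← RingHom.ker_eq_comap_bot, ker_map, Ideal.mk_ker]

theorem minorIdeal_sup_map_C_isPrime {P : Ideal O} (hP : P.IsPrime) :
    (minorIdeal O m ⊔ P.map C).IsPrime := by
  have : IsDomain (O ⧸ P) := (Ideal.Quotient.isDomain_iff_prime P).mpr hP
  have := minorIdeal_isPrime (A := O ⧸ P) (m := m)
  rw [minorIdeal_sup_map_C_eq_comap]
  exact Ideal.comap_isPrime _ _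

theorem splitChartIdeal_eq_sup (π : O) :
    splitChartIdeal O π m = minorIdeal O m ⊔
      Ideal.span {(∑ i : Fin m, xVar O i * yVar O i.rev) - C (2 * π)} := by
  rw [splitChartIdeal, Ideal.span_union, minorIdeal]

theorem sum_sub_C_notMem_minorIdeal_sup {π : O} (h2 : ¬π ∣ 2) (hm : 2 ≤ m) :
    (∑ i : Fin m, xVar O i * yVar O i.rev) - C (2 * π) ∉
      minorIdeal O m ⊔ (Ideal.span {π}).map C := by
  set P := Ideal.span {π}
  have h2P : (2 : O ⧸ P) ≠ 0 := by
    rwa [← map_ofNat (Ideal.Quotient.mk P) 2, Ne, Ideal.Quotient.eq_zero_iff_mem,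
      Ideal.mem_span_singleton]
  rw [minorIdeal_sup_map_C_eq_comap, Ideal.mem_comap]
  simpa [map_xVar, map_yVar, P] using sum_notMem_minorIdeal h2P hm

theorem mem_splitChartIdeal_of_C_mul_mem [IsDomain O] {π : O} (hπ : Prime π) (h2 : ¬π ∣ 2)
    (hm : 2 ≤ m) {f : MvPolynomial (Fin m ⊕ Fin m) O} (hf : C π * f ∈ splitChartIdeal O π m) :
    f ∈ splitChartIdeal O π m := by
  set g : MvPolynomial (Fin m ⊕ Fin m) O := (∑ i : Fin m, xVar O i * yVar O i.rev) - C (2 * π)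
  have hspan : ((Ideal.span {π}).map C : Ideal (MvPolynomial (Fin m ⊕ Fin m) O)) =
      Ideal.span {C π} := by
    rw [Ideal.map_span, Set.image_singleton]
  rw [splitChartIdeal_eq_sup, Submodule.mem_sup] at hf ⊢
  obtain ⟨j, hj, _, hs, hjs⟩ := hf
  obtain ⟨b, rfl⟩ := Ideal.mem_span_singleton'.mp hs
  change j + b * g = C π * f at hjs
  have hbg : b * g ∈ minorIdeal O m ⊔ (Ideal.span {π}).map C := by
    rw [← add_sub_cancel_left j (b * g), hjs, hspan]
    exact sub_mem (Ideal.mem_sup_right (Ideal.mul_mem_right _ _ (Ideal.mem_span_singleton_self _)))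
      (Ideal.mem_sup_left hj)
  have hb := ((minorIdeal_sup_map_C_isPrime
    ((Ideal.span_singleton_prime hπ.ne_zero).mpr hπ)).mem_or_mem hbg).resolve_right
    (sum_sub_C_notMem_minorIdeal_sup h2 hm)
  rw [hspan, Submodule.mem_sup] at hb
  obtain ⟨a, ha, _, hc, rfl⟩ := hb
  obtain ⟨b', rfl⟩ := Ideal.mem_span_singleton'.mp hc
  have hf' : f - b' * g ∈ minorIdeal O m := by
    have hmem : C π * (f - b' * g) ∈ minorIdeal O m := by
      rw [show C π * (f - b' * g) = j + a * g by linear_combination -hjs]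
      exact add_mem hj (Ideal.mul_mem_right _ _ ha)
    exact (minorIdeal_isPrime.mem_or_mem hmem).resolve_left (C_notMem_minorIdeal hπ.ne_zero)
  exact ⟨f - b' * g, hf', b' * g, Ideal.mul_mem_left _ b' (Ideal.mem_span_singleton_self g),
    sub_add_cancel f _⟩

end Torsion

theorem isSMulRegular_quotient_splitChartIdeal {O : Type*} [CommRing O] [IsDomain O] {π : O}
    (hπ : Prime π) (h2 : ¬π ∣ 2) {m : ℕ} (hm : 2 ≤ m) :
    IsSMulRegular (MvPolynomial (Fin m ⊕ Fin m) O ⧸ splitChartIdeal O π m) π := by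
  refine isSMulRegular_iff_right_eq_zero_of_smul.mpr fun x hx => ?_
  obtain ⟨f, rfl⟩ := Ideal.Quotient.mk_surjective x
  rw [← Ideal.Quotient.mkₐ_eq_mk O, ← map_smul, smul_eq_C_mul, Ideal.Quotient.mkₐ_eq_mk,
    Ideal.Quotient.eq_zero_iff_mem] at hx
  rw [Ideal.Quotient.eq_zero_iff_mem]
  exact mem_splitChartIdeal_of_C_mul_mem hπ h2 hm hx

theorem IsDiscreteValuationRing.isTorsionFree_of_isSMulRegular {R M : Type*} [CommRing R]
    [IsDomain R] [IsDiscreteValuationRing R] [AddCommGroup M] [Module R M] {ϖ : R}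
    (hϖ : Irreducible ϖ) (h : IsSMulRegular M ϖ) : Module.IsTorsionFree R M where
  isSMulRegular r hr := by
    obtain ⟨n, u, rfl⟩ := eq_unit_mul_pow_irreducible hr.ne_zero hϖ
    exact (u.isUnit.isSMulRegular M).mul (h.pow n)

/-- The chart ring `R_m` of the splitting model is flat over `O`. -/
theorem splitChart_flat (O : Type*) [CommRing O] [IsDomain O] [IsDiscreteValuationRing O]
    (h2 : IsUnit (2 : O)) (π : O) (hπ : Ideal.span {π} = IsLocalRing.maximalIdeal O)
    (m : ℕ) (hm : 3 ≤ m) :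
    Module.Flat O (MvPolynomial (Fin m ⊕ Fin m) O ⧸ splitChartIdeal O π m) := by
  have hirr : Irreducible π := (IsDiscreteValuationRing.irreducible_iff_uniformizer π).mpr hπ.symm
  have hπ2 : ¬π ∣ 2 := fun h => hirr.not_isUnit (isUnit_of_dvd_unit h h2)
  have := IsDiscreteValuationRing.isTorsionFree_of_isSMulRegular hirr
    (isSMulRegular_quotient_splitChartIdeal (m := m) hirr.prime hπ2 (by omega))
  infer_instance
end

section
/- There is an isomorphism of R-algebras R[v_2,…,v_m, u]/(u·(2v_m + Σ_{i=2}^{m−1} v_i v_{m+1−i}) − r) ≅ R[a, b, s_2,…,s_{m−1}]/(a·b − r). (This is the content of Remark 4.3(b): for 2ℓ+1 ≤ i_0 ≤ n the affine chart U_{i_0} of the splitting model already has semi-stable reduction, its special fiber being the union of the two smooth divisors u = 0 and V_2ᵗHV_2 = 0.) -/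
/-!
Since `2` is a unit and `Σ vᵢ v_{m+1−i}` does not involve `vₘ`, the substitution
`vₘ ↦ (vₘ − Σ vᵢ v_{m+1−i}) / 2` is an automorphism of the polynomial ring sending
`2vₘ + Σ vᵢ v_{m+1−i}` to `vₘ` and fixing `u`; it carries the equation
`u · (2vₘ + Σ vᵢ v_{m+1−i}) = r` to `u · vₘ = r`, which is `a · b = r` after renaming variables.
-/

open MvPolynomial

namespace MvPolynomial

variable {σ R : Type*} [CommRing R]

theorem X_mem_supported_of_mem {s : Set σ} {i : σ} (hi : i ∈ s) : X i ∈ supported R s :=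
  Algebra.subset_adjoin (Set.mem_image_of_mem X hi)

variable [DecidableEq σ]

theorem aeval_update_X_of_mem_supported {i : σ} {p : MvPolynomial σ R}
    (hp : p ∈ supported R {i}ᶜ) (q : MvPolynomial σ R) :
    aeval (Function.update X i q) p = p := by
  conv_rhs => rw [← aeval_X_left_apply p]
  exact eval₂Hom_congr' rfl (fun j hj _ => Function.update_of_ne (mem_supported.1 hp hj) _ _) rfl

theorem aeval_update_X_of_ne {i j : σ} (hj : j ≠ i) (q : MvPolynomial σ R) :
    aeval (Function.update X i q) (X j : MvPolynomial σ R) = X j := by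
  rw [aeval_X, Function.update_of_ne hj]

noncomputable def shearAlgEquiv (i : σ) (a : Rˣ) (p : MvPolynomial σ R)
    (hp : p ∈ supported R {i}ᶜ) : MvPolynomial σ R ≃ₐ[R] MvPolynomial σ R :=
  AlgEquiv.ofAlgHom (aeval (Function.update X i (C (a : R) * X i + p)))
    (aeval (Function.update X i (C (↑a⁻¹ : R) * (X i - p))))
    (algHom_ext fun j => by
      rcases eq_or_ne j i with rfl | hj
      · simp only [AlgHom.comp_apply, aeval_X, Function.update_self, map_mul, map_sub, aeval_C,
          algebraMap_eq, aeval_update_X_of_mem_supported hp, add_sub_cancel_right, ← mul_assoc,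
          ← C_mul, Units.inv_mul, C_1, one_mul, AlgHom.id_apply]
      · simp only [AlgHom.comp_apply, aeval_update_X_of_ne hj, AlgHom.id_apply])
    (algHom_ext fun j => by
      rcases eq_or_ne j i with rfl | hj
      · simp only [AlgHom.comp_apply, aeval_X, Function.update_self, map_mul, map_add, aeval_C,
          algebraMap_eq, aeval_update_X_of_mem_supported hp, ← mul_assoc,
          ← C_mul, Units.mul_inv, C_1, one_mul, sub_add_cancel, AlgHom.id_apply]
      · simp only [AlgHom.comp_apply, aeval_update_X_of_ne hj, AlgHom.id_apply])

theorem shearAlgEquiv_X_self (i : σ) (a : Rˣ) (p : MvPolynomial σ R) (hp : p ∈ supported R {i}ᶜ) :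
    shearAlgEquiv i a p hp (X i) = C (a : R) * X i + p :=
  (aeval_X _ i).trans (Function.update_self ..)

theorem shearAlgEquiv_X_of_ne {i j : σ} (hj : j ≠ i) (a : Rˣ) (p : MvPolynomial σ R)
    (hp : p ∈ supported R {i}ᶜ) : shearAlgEquiv i a p hp (X j) = X j :=
  aeval_update_X_of_ne hj _

theorem nonempty_algEquiv_quotient_span_X_mul_sub_C {u i j : σ} (hui : u ≠ i) (huj : u ≠ j)
    {a : R} (ha : IsUnit a) {Q : MvPolynomial σ R} (hQ : Q - C a * X i ∈ supported R {i}ᶜ)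
    (r : R) :
    Nonempty ((MvPolynomial σ R ⧸ Ideal.span {X u * Q - C r}) ≃ₐ[R]
      (MvPolynomial σ R ⧸ Ideal.span {X u * X j - C r})) := by
  set shear := shearAlgEquiv i ha.unit (Q - C a * X i) hQ
  have hshear_Q : shear.symm Q = X i := by
    rw [AlgEquiv.symm_apply_eq, shearAlgEquiv_X_self, ha.unit_spec, add_sub_cancel]
  have hshear_u : shear.symm (X u) = X u := by
    rw [AlgEquiv.symm_apply_eq, shearAlgEquiv_X_of_ne hui]
  let e := shear.symm.trans (renameEquiv R (Equiv.swap i j))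
  have he : e (X u * Q - C r) = X u * X j - C r := by
    rw [map_sub, map_mul, ← algebraMap_eq, AlgEquiv.commutes]
    simp [e, hshear_Q, hshear_u, Equiv.swap_apply_of_ne_of_ne hui huj]
  refine ⟨Ideal.quotientEquivAlg _ _ e ?_⟩
  rw [Ideal.map_span, Set.image_singleton]
  exact congrArg (fun x => Ideal.span {x}) he.symm

end MvPolynomial

/-- The chart `U_{i₀}`, `2ℓ+1 ≤ i₀ ≤ n`, of the splitting model is already semi-stable:
it is, up to a polynomial factor, the standard ring with equation `a·b = r`. -/
theorem chart_semistable_iso (R : Type*) [CommRing R] (h2 : IsUnit (2 : R)) (r : R)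
    (m : ℕ) (hm : 2 ≤ m) :
    Nonempty
      ((MvPolynomial (Fin m) R ⧸
          Ideal.span {X (⟨0, by omega⟩ : Fin m) *
            (2 * X (⟨m - 1, by omega⟩ : Fin m) +
              ∑ i ∈ (Finset.Ico 2 m).attach,
                X (⟨i.1 - 1, by have h := i.2; rw [Finset.mem_Ico] at h; omega⟩ : Fin m) *
                  X (⟨m - i.1, by have h := i.2; rw [Finset.mem_Ico] at h; omega⟩ : Fin m)) -
            C r}) ≃ₐ[R]
        (MvPolynomial (Fin m) R ⧸
          Ideal.span {X (⟨0, by omega⟩ : Fin m) * X ⟨1, by omega⟩ - C r})) := by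
  refine nonempty_algEquiv_quotient_span_X_mul_sub_C (i := ⟨m - 1, by omega⟩) ?_ ?_ h2 ?_ r
  · simp only [ne_eq, Fin.ext_iff]
    omega
  · simp only [ne_eq, Fin.ext_iff]
    omega
  · rw [← map_ofNat C 2, add_sub_cancel_left]
    refine Subalgebra.sum_mem _ fun i _ =>
      mul_mem (X_mem_supported_of_mem ?_) (X_mem_supported_of_mem ?_) <;>
    · have := Finset.mem_Ico.mp i.2
      simp only [Set.mem_compl_iff, Set.mem_singleton_iff, Fin.ext_iff]
      omega
end

section
/- Let V_1, Z_1 ∈ R^{2ℓ} be column vectors, a ∈ R, and suppose some entry of V_1 equals 1. Then the matrix equation J·Z_1·V_1ᵗ·J + V_1·Z_1ᵗ = a·V_1·V_1ᵗ·J holds if and only if Z_1 = −(a/2)·J·V_1. (This is the key computation in Case 1 of the proof of Proposition 4.2, determining Z_1 in terms of V_1 and a = Z_2ᵗHZ_2 and thereby eliminating the variables Z_1 from the chart presentation.) -/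
/-!
STATEMENT 16: For column vectors `V₁, Z₁ ∈ R^{2ℓ}`, a scalar `a`, with some entry of `V₁`
equal to `1`, the matrix equation `J·Z₁·V₁ᵗ·J + V₁·Z₁ᵗ = a·V₁·V₁ᵗ·J` holds if and only if
`Z₁ = −(a/2)·J·V₁` (here `2` is a unit in `R` and `a/2` means `a · 2⁻¹`).
-/

open Matrix

/-- The `2ℓ×2ℓ` matrix `J = [[0, H_ℓ],[−H_ℓ, 0]]`. -/
def Jmat (R : Type*) [CommRing R] (ℓ : ℕ) : Matrix (Fin (2 * ℓ)) (Fin (2 * ℓ)) R :=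
  Matrix.of fun i j =>
    if i.val + j.val + 1 = 2 * ℓ then (if i.val < ℓ then (1 : R) else -1) else 0

section helpers
variable {R : Type*} [CommRing R] {ℓ : ℕ}

lemma mul_vecMulVec' (A : Matrix (Fin (2*ℓ)) (Fin (2*ℓ)) R) (Z V : Fin (2*ℓ) → R) :
    A * vecMulVec Z V = vecMulVec (A *ᵥ Z) V := by
  ext i j
  simp [mul_apply, vecMulVec_apply, mulVec, dotProduct, Finset.sum_mul, mul_assoc]

lemma vecMulVec_mul' (A : Matrix (Fin (2*ℓ)) (Fin (2*ℓ)) R) (Z V : Fin (2*ℓ) → R) :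
    vecMulVec Z V * A = vecMulVec Z (V ᵥ* A) := by
  ext i j
  simp [mul_apply, vecMulVec_apply, vecMul, dotProduct, Finset.mul_sum, mul_assoc]

lemma mulVec_J (V : Fin (2*ℓ) → R) (i : Fin (2*ℓ)) :
    (Jmat R ℓ *ᵥ V) i = (if (i : ℕ) < ℓ then (1:R) else -1) * V i.rev := by
  simp only [mulVec, dotProduct, Jmat, of_apply]
  rw [Finset.sum_eq_single i.rev]
  · have h1 : (i : ℕ) + (i.rev : ℕ) + 1 = 2 * ℓ := by
      have := i.isLt; simp [Fin.rev]; omega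
    rw [if_pos h1, mul_comm]
  · intro k _ hk
    have : ¬ ((i : ℕ) + (k : ℕ) + 1 = 2 * ℓ) := by
      intro h
      apply hk
      have : (k : ℕ) = (i.rev : ℕ) := by simp [Fin.rev]; omega
      exact Fin.ext this
    simp [this]
  · intro h; exact absurd (Finset.mem_univ _) h

lemma vecMul_J (V : Fin (2*ℓ) → R) : V ᵥ* Jmat R ℓ = -(Jmat R ℓ *ᵥ V) := by
  funext j
  rw [Pi.neg_apply, mulVec_J]
  simp only [vecMul, dotProduct, Jmat, of_apply]
  rw [Finset.sum_eq_single j.rev]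
  · have h1 : (j.rev : ℕ) + (j : ℕ) + 1 = 2 * ℓ := by
      have := j.isLt; simp [Fin.rev]; omega
    have h2 : ((j.rev : ℕ) < ℓ) ↔ ¬ ((j : ℕ) < ℓ) := by
      have := j.isLt; simp [Fin.rev]; omega
    rw [if_pos h1]
    by_cases hj : (j : ℕ) < ℓ
    · rw [if_neg (fun hr => (h2.1 hr) hj), if_pos hj]; ring
    · rw [if_pos (h2.2 hj), if_neg hj]; ring
  · intro k _ hk
    have : ¬ ((k : ℕ) + (j : ℕ) + 1 = 2 * ℓ) := by
      intro h
      apply hk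
      have : (k : ℕ) = (j.rev : ℕ) := by simp [Fin.rev]; omega
      exact Fin.ext this
    simp [this]
  · intro h; exact absurd (Finset.mem_univ _) h

lemma J_J_mulVec (V : Fin (2*ℓ) → R) : Jmat R ℓ *ᵥ (Jmat R ℓ *ᵥ V) = -V := by
  funext i
  have h2 : ((i.rev : ℕ) < ℓ) ↔ ¬ ((i : ℕ) < ℓ) := by
    have := i.isLt; simp [Fin.rev]; omega
  rw [Pi.neg_apply, mulVec_J, mulVec_J, Fin.rev_rev]
  by_cases h : (i : ℕ) < ℓ
  · rw [if_pos h, if_neg (fun hr => (h2.1 hr) h)]; ring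
  · rw [if_neg h, if_pos (h2.2 h)]; ring
end helpers


theorem Z1_elimination (R : Type*) [CommRing R] (h2 : IsUnit (2 : R))
    (ℓ : ℕ) (hℓ : 1 ≤ ℓ) (V1 Z1 : Fin (2 * ℓ) → R) (a : R) (hV : ∃ i, V1 i = 1) :
    (Jmat R ℓ * vecMulVec Z1 V1 * Jmat R ℓ + vecMulVec V1 Z1 =
        a • (vecMulVec V1 V1 * Jmat R ℓ)) ↔
      Z1 = fun i => -(a * Ring.inverse (2 : R)) * ((Jmat R ℓ) *ᵥ V1) i := by
  set J := Jmat R ℓ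
  set W := J *ᵥ V1 with hW
  have hinv : Ring.inverse (2 : R) * 2 = 1 := Ring.inverse_mul_cancel _ h2
  have heq : (J * vecMulVec Z1 V1 * J + vecMulVec V1 Z1 =
        a • (vecMulVec V1 V1 * J)) ↔
      ∀ i j, -((J *ᵥ Z1) i * W j) + V1 i * Z1 j = -(a * (V1 i * W j)) := by
    rw [mul_vecMulVec', vecMulVec_mul', vecMulVec_mul', vecMul_J, ← Matrix.ext_iff]
    apply forall_congr'; intro i; apply forall_congr'; intro j
    simp only [Matrix.add_apply, Matrix.smul_apply, vecMulVec_apply, Pi.neg_apply,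
      smul_eq_mul]
    constructor <;> intro h <;> linear_combination h
  rw [heq]
  constructor
  · intro h
    obtain ⟨i₀, hi₀⟩ := hV
    set c : R := (J *ᵥ Z1) i₀ - a with hc
    have hZ : Z1 = fun j => c * W j := by
      funext j
      have := h i₀ j
      rw [hi₀] at this
      rw [hc]
      linear_combination this
    have hJZ : (J *ᵥ Z1) i₀ = -c := by
      have : J *ᵥ Z1 = c • (J *ᵥ W) := by
        rw [hZ, show (fun j => c * W j) = c • W from rfl, mulVec_smul]
      rw [this, hW, J_J_mulVec]
      simp [hi₀]
    have h2c : 2 * c = -a := by linear_combination hJZ + hc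
    have hcval : c = -(a * Ring.inverse 2) := by
      calc c = Ring.inverse 2 * (2 * c) := by rw [← mul_assoc, hinv, one_mul]
      _ = -(a * Ring.inverse 2) := by rw [h2c]; ring
    rw [hZ]; funext j; rw [hcval]
  · intro h i j
    have hJZ : (J *ᵥ Z1) i = (a * Ring.inverse 2) * V1 i := by
      have : Z1 = (-(a * Ring.inverse (2:R))) • W := by funext k; simpa using congrFun h k
      rw [this, mulVec_smul, hW, J_J_mulVec]
      simp
    rw [hJZ, congrFun h j]
    linear_combination (-(V1 i * W j)) * hinv * a
end
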